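/- Let α ∈ [0,1] and τ ∈ [0,1], and define f(κ) := 2 − 2(1−τ)α − 2τακ + ((1+τ)/2)ακ² for κ ∈ (1,2). Then the infimum over κ ∈ (1,2) of max( 2f(κ)/κ², f(κ) ) equals 2 − α + (3 − 2√2)τα, and it is attained at κ = √2. -/

import Mathlib

/-!
Write `f` for the quadratic of the statement. Its vertex `2τ/(1+τ)` lies left of `1`, so `f` is
increasing on `[1, ∞)`; and `2 f(κ)/κ²` is a convex quadratic in `1/κ` with vertex left of
`1/√2`, so it is decreasing on `(0, √2]`. The two branches of the maximum agree at `κ = √2`,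
hence every `κ ∈ (1, 2)` has a branch that is at least its value `f(√2)` there.
-/

noncomputable section

open Real Set

namespace MinGAtSqrtTwo

def f (α τ κ : ℝ) : ℝ :=
  2 - 2 * (1 - τ) * α - 2 * τ * α * κ + ((1 + τ) / 2) * α * κ ^ 2

variable {α τ : ℝ}

theorem f_sqrt_two : f α τ √2 = 2 - α + (3 - 2 * √2) * τ * α := by
  have h : √2 ^ 2 = 2 := sq_sqrt zero_le_two
  rw [f, h]
  ring

theorem two_mul_f_sqrt_two_div_sq : 2 * f α τ √2 / √2 ^ 2 = f α τ √2 := by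
  rw [sq_sqrt zero_le_two]
  ring

theorem monotoneOn_f (hα : 0 ≤ α) (hτ₀ : 0 ≤ τ) (hτ₁ : τ ≤ 1) : MonotoneOn (f α τ) (Ici 1) := by
  intro x (hx : 1 ≤ x) y (hy : 1 ≤ y) hxy
  have hdiff : f α τ y - f α τ x = α * (y - x) * ((1 + τ) / 2 * (x + y) - 2 * τ) := by
    unfold f
    ring
  have hslope : 0 ≤ (1 + τ) / 2 * (x + y) - 2 * τ := by nlinarith
  have := mul_nonneg (mul_nonneg hα (sub_nonneg.2 hxy)) hslope
  linarith

theorem antitoneOn_two_mul_f_div_sq (hα₀ : 0 ≤ α) (hα₁ : α ≤ 1) (hτ : 0 ≤ τ) :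
    AntitoneOn (fun κ => 2 * f α τ κ / κ ^ 2) (Ioc 0 √2) := by
  intro x ⟨hx₀, hx⟩ y ⟨hy₀, hy⟩ hxy
  set A := 4 - 4 * (1 - τ) * α
  have hdiff : 2 * f α τ x / x ^ 2 - 2 * f α τ y / y ^ 2
      = (1 / x - 1 / y) * (A * (1 / x + 1 / y) - 4 * τ * α) := by
    unfold f
    field_simp
    ring
  have hs : √2 * √2 = 2 := mul_self_sqrt zero_le_two
  have hinv : ∀ z, 0 < z → z ≤ √2 → √2 / 2 ≤ 1 / z := fun z hz hz' => by
    rw [div_le_div_iff₀ two_pos hz]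
    nlinarith
  have hsum : √2 ≤ 1 / x + 1 / y := by linarith [hinv x hx₀ hx, hinv y hy₀ hy]
  have hA : 0 ≤ A := by nlinarith
  have hslope : 0 ≤ A * (1 / x + 1 / y) - 4 * τ * α := by
    have hs₁ : 1 ≤ √2 := one_le_sqrt.2 one_le_two
    nlinarith [mul_le_mul_of_nonneg_left hsum hA, mul_nonneg hτ hα₀]
  have hrecip : 0 ≤ 1 / x - 1 / y := sub_nonneg.2 (one_div_le_one_div_of_le hx₀ hxy)
  have := mul_nonneg hrecip hslope
  dsimp only
  linarith

end MinGAtSqrtTwo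

open MinGAtSqrtTwo in
theorem min_g_at_sqrt_two (α τ : ℝ) (hα : α ∈ Set.Icc (0 : ℝ) 1)
    (hτ : τ ∈ Set.Icc (0 : ℝ) 1) :
    IsLeast
      ((fun κ : ℝ =>
          max (2 * (2 - 2 * (1 - τ) * α - 2 * τ * α * κ + ((1 + τ) / 2) * α * κ ^ 2) / κ ^ 2)
            (2 - 2 * (1 - τ) * α - 2 * τ * α * κ + ((1 + τ) / 2) * α * κ ^ 2)) ''
        Set.Ioo (1 : ℝ) 2)
      (2 - α + (3 - 2 * Real.sqrt 2) * τ * α) ∧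
    (max (2 * (2 - 2 * (1 - τ) * α - 2 * τ * α * Real.sqrt 2 +
            ((1 + τ) / 2) * α * (Real.sqrt 2) ^ 2) / (Real.sqrt 2) ^ 2)
        (2 - 2 * (1 - τ) * α - 2 * τ * α * Real.sqrt 2 +
            ((1 + τ) / 2) * α * (Real.sqrt 2) ^ 2))
      = 2 - α + (3 - 2 * Real.sqrt 2) * τ * α := by
  obtain ⟨hα₀, hα₁⟩ := hα
  obtain ⟨hτ₀, hτ₁⟩ := hτ
  change IsLeast ((fun κ => max (2 * f α τ κ / κ ^ 2) (f α τ κ)) '' Ioo 1 2) _ ∧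
    max (2 * f α τ √2 / √2 ^ 2) (f α τ √2) = _
  have hvalue : max (2 * f α τ √2 / √2 ^ 2) (f α τ √2) = 2 - α + (3 - 2 * √2) * τ * α := by
    rw [two_mul_f_sqrt_two_div_sq, max_self, f_sqrt_two]
  have hs₁ : 1 < √2 := (lt_sqrt zero_le_one).2 (by norm_num)
  have hs₂ : √2 < 2 := (sqrt_lt' two_pos).2 (by norm_num)
  refine ⟨⟨⟨√2, ⟨hs₁, hs₂⟩, hvalue⟩, ?_⟩, hvalue⟩
  rintro _ ⟨κ, ⟨hκ₁, -⟩, rfl⟩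
  rw [← hvalue, two_mul_f_sqrt_two_div_sq, max_self]
  rcases le_total κ √2 with hκ | hκ
  · calc f α τ √2 = 2 * f α τ √2 / √2 ^ 2 := two_mul_f_sqrt_two_div_sq.symm
      _ ≤ 2 * f α τ κ / κ ^ 2 := antitoneOn_two_mul_f_div_sq hα₀ hα₁ hτ₀
          ⟨by linarith, hκ⟩ ⟨by linarith, le_rfl⟩ hκ
      _ ≤ _ := le_max_left _ _
  · exact (monotoneOn_f hα₀ hτ₀ hτ₁ (mem_Ici.2 hs₁.le) (mem_Ici.2 hκ₁.le) hκ).trans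
      (le_max_right _ _)
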